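/- Let K be a field and q ∈ K an element that is not a root of unity. In the quantum plane B = B(q), consider the left ideals I = B(ab−1)(a−1) ⊆ J = B(a−1), and set M = B/I и V = J/I. Then M is an essential extension of its submodule V, i.e., every nonzero B-submodule of M intersects V nontrivially. -/

import Mathlib

noncomputable section

open FreeAlgebra

/-- Defining relation of the quantum plane `B(q)`: `a * b = q • (b * a)`, where
`ι K 0` plays the role of `a` and `ι K 1` plays the role of `b`. -/
inductive QuantumPlaneRel (K : Type) [Field K] (q : K) :
    FreeAlgebra K (Fin 2) → FreeAlgebra K (Fin 2) → Prop
  | rel : QuantumPlaneRel K q (ι K (0 : Fin 2) * ι K (1 : Fin 2))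
      (q • (ι K (1 : Fin 2) * ι K (0 : Fin 2)))

/-- The coordinate algebra of the quantum plane `B(q)`. -/
abbrev QuantumPlane (K : Type) [Field K] (q : K) : Type :=
  RingQuot (QuantumPlaneRel K q)

/-- The generator `a` of the quantum plane. -/
def QuantumPlane.a (K : Type) [Field K] (q : K) : QuantumPlane K q :=
  RingQuot.mkAlgHom K (QuantumPlaneRel K q) (ι K (0 : Fin 2))

/-- The generator `b` of the quantum plane. -/
def QuantumPlane.b (K : Type) [Field K] (q : K) : QuantumPlane K q :=
  RingQuot.mkAlgHom K (QuantumPlaneRel K q) (ι K (1 : Fin 2))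

/-!
Let `I = B(ab-1)(a-1)` and `J = B(a-1)`. Writing `z k` for `a ^ k` (`k ≥ 0`) and `b ^ (-k)`
(`k < 0`), the classes of the `z k * (a - 1)` form a basis of `V = J/I ≅ B/B(ab-1)` and the
classes of the `b ^ n` lift a basis of `M/V = B/J`; we realise `M = B/I` as an explicit
representation of `B` on `(ℤ →₀ K) × (ℕ →₀ K)`. Modulo `V`, `a` acts diagonally on the `b ^ n`
with the pairwise distinct eigenvalues `q ^ n`. On `V` it acts as a weighted shift
`z k ↦ z (k+1)` with nonzero weights, so `a - q ^ n` sends a nonzero vector of `V` to one with at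
least two nonzero coordinates. Together, `a` has no eigenvector in `M`.

Now let `N ≠ 0` with `N ∩ V = 0`, and choose `0 ≠ m ∈ N` whose image in `B/J` has the fewest
`b ^ n`-coordinates; let `q ^ n` be the eigenvalue of one of them. Then `a m - q ^ n m ∈ N` has
fewer coordinates, so by minimality it is zero or has zero image in `B/J`. Either way it lies in
`N ∩ V = 0`, so `m` is an eigenvector of `a`: a contradiction.
-/

open Finsupp Finset

theorem Submodule.inf_ne_bot_of_diagonal_of_no_eigenvector {R K M ι : Type*} [Ring R]
    [CommRing K] [SMul K R] [AddCommGroup M] [Module R M] [Module K M] [IsScalarTower K R M]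
    {V N : Submodule R M} (ψ : M →ₗ[K] ι →₀ K) (hψ : ∀ m, ψ m = 0 → m ∈ V)
    (r : R) (μ : ι → K) (hr : ∀ m i, ψ (r • m) i = μ i * ψ m i)
    (h_eigen : ∀ i (m : M), r • m = μ i • m → m = 0) (hN : N ≠ ⊥) : N ⊓ V ≠ ⊥ := by
  classical
  intro hNV
  obtain ⟨m₀, hm₀N, hm₀⟩ := Submodule.exists_mem_ne_zero_of_ne_bot hN
  have hex : ∃ n, ∃ m ∈ N, m ≠ 0 ∧ #(ψ m).support = n := ⟨_, m₀, hm₀N, hm₀, rfl⟩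
  obtain ⟨m, hmN, hm0, hcard⟩ := Nat.find_spec hex
  obtain ⟨j, hj⟩ : (ψ m).support.Nonempty := by
    refine support_nonempty_iff.2 fun hψm => hm0 ?_
    rw [← Submodule.mem_bot R, ← hNV]
    exact ⟨hmN, hψ m hψm⟩
  set m' := r • m - μ j • m
  have hψm' : ∀ i, ψ m' i = (μ i - μ j) * ψ m i := fun i => by
    simp only [m', map_sub, map_smul, Finsupp.coe_sub, Finsupp.coe_smul, Pi.sub_apply,
      Pi.smul_apply, hr, smul_eq_mul, sub_mul]
  by_cases hm' : m' = 0
  · exact hm0 (h_eigen j m (sub_eq_zero.1 hm'))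
  have hsupp : (ψ m').support ⊆ (ψ m).support.erase j := fun i hi => by
    rw [mem_support_iff, hψm'] at hi
    refine mem_erase.2 ⟨fun hij => hi (by rw [hij, sub_self, zero_mul]), ?_⟩
    exact mem_support_iff.2 (right_ne_zero_of_mul hi)
  have hm'N : m' ∈ N := N.sub_mem (N.smul_mem r hmN) (N.smul_of_tower_mem _ hmN)
  refine Nat.find_min hex ?_ ⟨m', hm'N, hm', rfl⟩
  rw [← hcard]
  exact (card_le_card hsupp).trans_lt (card_erase_lt_of_mem hj)

theorem pow_injective_of_pow_ne_one {G₀ : Type*} [GroupWithZero G₀] {x : G₀} (hx0 : x ≠ 0)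
    (hx : ∀ k : ℕ, 0 < k → x ^ k ≠ 1) : Function.Injective (x ^ · : ℕ → G₀) := by
  intro k m hkm
  refine injective_pow_iff_not_isOfFinOrder.2 (fun h => ?_)
    (Units.ext (by simpa using hkm) : Units.mk0 x hx0 ^ k = Units.mk0 x hx0 ^ m)
  obtain ⟨n, hn, hn1⟩ := isOfFinOrder_iff_pow_eq_one.1 h
  exact hx n hn (by simpa using congr_arg Units.val hn1)

theorem Ideal.mul_mem_span_singleton_mul {R : Type*} [Semiring R] {x y : R} (z : R)
    (h : x ∈ Ideal.span {y}) : x * z ∈ Ideal.span {y * z} := by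
  obtain ⟨c, rfl⟩ := Ideal.mem_span_singleton'.1 h
  exact Ideal.mem_span_singleton'.2 ⟨c, (mul_assoc c y z).symm⟩

namespace Finsupp

variable {K ι κ : Type*} [CommSemiring K]

def weightedMap (c : ι → K) (f : ι → κ) : (ι →₀ K) →ₗ[K] κ →₀ K :=
  linearCombination K fun i => single (f i) (c i)

@[simp]
theorem weightedMap_single (c : ι → K) (f : ι → κ) (i : ι) (t : K) :
    weightedMap c f (single i t) = single (f i) (t * c i) := by
  rw [weightedMap, linearCombination_single, smul_single, smul_eq_mul]

theorem weightedMap_apply {c : ι → K} {f : ι → κ} (hf : f.Injective) (v : ι →₀ K) (i : ι) :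
    weightedMap c f v (f i) = c i * v i := by
  classical
  induction v using Finsupp.induction_linear with
  | zero => simp
  | add v w hv hw => simp only [map_add, coe_add, Pi.add_apply, hv, hw, mul_add]
  | single j t =>
    rw [weightedMap_single, single_apply_left hf, single_apply, single_apply]
    split_ifs with h
    · rw [h, mul_comm]
    · rw [mul_zero]

theorem eq_zero_of_weightedMap_add_one_add_single_eq_smul {K : Type*} [CommRing K]
    [NoZeroDivisors K] {c : ℤ → K} (hc : ∀ k, c k ≠ 0) {μ : K} (hμ : μ ≠ 0) {v : ℤ →₀ K}
    {p : ℤ} {t : K} (h : weightedMap c (· + 1) v + single p t = μ • v) : v = 0 := by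
  by_contra hv
  have hne := support_nonempty_iff.2 hv
  have hcoord : ∀ k, single p t (k + 1) = μ * v (k + 1) - c k * v k := fun k => by
    rw [eq_sub_iff_add_eq', ← weightedMap_apply (add_left_injective 1), ← Finsupp.add_apply, h,
      Finsupp.smul_apply, smul_eq_mul]
  have hbot : single p t (v.support.min' hne) ≠ 0 := by
    have hbelow : v (v.support.min' hne - 1) = 0 := notMem_support_iff.1 fun hmem => by
      have := min'_le _ _ hmem; omega
    have := hcoord (v.support.min' hne - 1)
    rw [sub_add_cancel, hbelow, mul_zero, sub_zero] at this
    rw [this]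
    exact mul_ne_zero hμ (mem_support_iff.1 (min'_mem _ _))
  have htop : single p t (v.support.max' hne + 1) ≠ 0 := by
    have habove : v (v.support.max' hne + 1) = 0 := notMem_support_iff.1 fun hmem => by
      have := le_max' _ _ hmem; omega
    rw [hcoord, habove, mul_zero, zero_sub, neg_ne_zero]
    exact mul_ne_zero (hc _) (mem_support_iff.1 (max'_mem _ _))
  rw [single_apply_ne_zero] at hbot htop
  have := min'_le_max' v.support hne
  omega

theorem linearMap_prod_mem_of_single_mem {K α β M : Type*} [CommRing K] [AddCommGroup M]
    [Module K M] {P : Submodule K M} (f : (α →₀ K) × (β →₀ K) →ₗ[K] M)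
    (h₁ : ∀ i, f (single i 1, 0) ∈ P) (h₂ : ∀ j, f (0, single j 1) ∈ P)
    (w : (α →₀ K) × (β →₀ K)) : f w ∈ P := by
  have : P.mkQ ∘ₗ f = 0 := by
    ext i <;> simp [h₁, h₂]
  simpa using LinearMap.congr_fun this w

end Finsupp

namespace QuantumPlane

variable {K : Type} [Field K] {q : K}

local notation "𝔞" => QuantumPlane.a K q
local notation "𝔟" => QuantumPlane.b K q
local notation "𝓘" => (Ideal.span {(𝔞 * 𝔟 - 1) * (𝔞 - 1)} : Ideal (QuantumPlane K q))

section Generators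

variable (K q)

theorem a_mul_b : 𝔞 * 𝔟 = q • (𝔟 * 𝔞) := by
  simpa only [a, b, map_mul, map_smul] using
    RingQuot.mkAlgHom_rel K (QuantumPlaneRel.rel (K := K) (q := q))

theorem a_mul_b_pow (n : ℕ) : 𝔞 * 𝔟 ^ n = q ^ n • (𝔟 ^ n * 𝔞) := by
  induction n with
  | zero => simp
  | succ n ih =>
    rw [pow_succ, ← mul_assoc, ih, smul_mul_assoc, mul_assoc, a_mul_b, mul_smul_comm, smul_smul,
      ← mul_assoc, ← pow_succ]

theorem a_pow_mul_b (n : ℕ) : 𝔞 ^ n * 𝔟 = q ^ n • (𝔟 * 𝔞 ^ n) := by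
  induction n with
  | zero => simp
  | succ n ih =>
    rw [pow_succ', mul_assoc, ih, mul_smul_comm, ← mul_assoc, a_mul_b, smul_mul_assoc, smul_smul,
      mul_assoc, ← pow_succ, ← pow_succ']

theorem induction_on {P : QuantumPlane K q → Prop} (algebraMap : ∀ c, P (algebraMap K _ c))
    (a : P 𝔞) (b : P 𝔟) (add : ∀ x y, P x → P y → P (x + y))
    (mul : ∀ x y, P x → P y → P (x * y)) (x : QuantumPlane K q) : P x := by
  obtain ⟨x, rfl⟩ := RingQuot.mkAlgHom_surjective K _ x
  induction x using FreeAlgebra.induction with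
  | grade0 c => rw [AlgHom.commutes]; exact algebraMap c
  | grade1 i => fin_cases i; exacts [a, b]
  | mul x y hx hy => rw [map_mul]; exact mul _ _ hx hy
  | add x y hx hy => rw [map_add]; exact add _ _ hx hy

-- `a ^ k` for `k ≥ 0` and `b ^ (-k)` for `k < 0`
def zMonomial (k : ℤ) : QuantumPlane K q := 𝔟 ^ (-k).toNat * 𝔞 ^ k.toNat

theorem zMonomial_natCast (n : ℕ) : zMonomial K q n = 𝔞 ^ n := by
  simp [zMonomial]

theorem zMonomial_neg_natCast (n : ℕ) : zMonomial K q (-n) = 𝔟 ^ n := by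
  simp [zMonomial]

end Generators

section Weights

-- `aWeight q k` is `1` for `k ≥ 0` and `q ^ (-k - 1)` for `k < 0`;
-- `bWeight q k` is `(q ^ k)⁻¹` for `k ≥ 0` and `1` for `k < 0`.
def aWeight (q : K) (k : ℤ) : K := q ^ max (-k - 1) 0

def bWeight (q : K) (k : ℤ) : K := q ^ (-max k 0)

theorem bWeight_mul_aWeight_sub_one (hq0 : q ≠ 0) (k : ℤ) :
    bWeight q k * aWeight q (k - 1) = q * (aWeight q k * bWeight q (k + 1)) := by
  simp only [aWeight, bWeight]
  rw [← zpow_add₀ hq0, ← zpow_add₀ hq0, ← zpow_one_add₀ hq0]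
  congr 1
  omega

theorem bWeight_neg_natCast (q : K) (n : ℕ) : bWeight q (-n) = 1 := by
  rw [bWeight, max_eq_right (by omega), neg_zero, zpow_zero]

variable (K q) in
theorem a_mul_zMonomial_sub_mem (k : ℤ) :
    𝔞 * zMonomial K q k - aWeight q k • zMonomial K q (k + 1) ∈ Ideal.span {𝔞 * 𝔟 - 1} := by
  cases k with
  | ofNat n =>
    have hw : aWeight q n = 1 := by rw [aWeight, max_eq_right (by omega), zpow_zero]
    rw [Int.ofNat_eq_natCast, hw, one_smul, ← Nat.cast_succ, zMonomial_natCast,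
      zMonomial_natCast, ← pow_succ', sub_self]
    exact zero_mem _
  | negSucc n =>
    have hw : aWeight q (Int.negSucc n) = q ^ n := by
      rw [aWeight, max_eq_left (by omega), show -Int.negSucc n - 1 = n by omega, zpow_natCast]
    rw [hw, show Int.negSucc n = -(n + 1 : ℕ) by omega,
      show -((n + 1 : ℕ) : ℤ) + 1 = -n by omega, zMonomial_neg_natCast, zMonomial_neg_natCast]
    refine Ideal.mem_span_singleton'.2 ⟨q ^ n • 𝔟 ^ n, ?_⟩
    rw [pow_succ, ← mul_assoc, a_mul_b_pow]
    simp only [smul_mul_assoc, mul_sub, mul_one, mul_assoc]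

theorem b_mul_zMonomial_sub_mem (hq0 : q ≠ 0) (k : ℤ) :
    𝔟 * zMonomial K q k - bWeight q k • zMonomial K q (k - 1) ∈ Ideal.span {𝔞 * 𝔟 - 1} := by
  cases k with
  | ofNat n =>
    rw [Int.ofNat_eq_natCast]
    cases n with
    | zero => simp [bWeight, zMonomial]
    | succ n =>
      have hw : bWeight q (n + 1 : ℕ) = (q ^ (n + 1))⁻¹ := by
        rw [bWeight, max_eq_left (by omega), zpow_neg, zpow_natCast]
      rw [hw, Nat.cast_succ, add_sub_cancel_right, ← Nat.cast_succ, zMonomial_natCast,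
        zMonomial_natCast]
      refine Ideal.mem_span_singleton'.2 ⟨(q ^ (n + 1))⁻¹ • 𝔞 ^ n, ?_⟩
      rw [smul_mul_assoc, mul_sub, mul_one, ← mul_assoc, ← pow_succ, a_pow_mul_b, smul_sub,
        smul_smul, inv_mul_cancel₀ (pow_ne_zero _ hq0), one_smul]
  | negSucc n =>
    rw [show Int.negSucc n = -(n + 1 : ℕ) by omega, bWeight_neg_natCast, one_smul,
      show -((n + 1 : ℕ) : ℤ) - 1 = -(n + 2 : ℕ) by omega, zMonomial_neg_natCast,
      zMonomial_neg_natCast, ← pow_succ', sub_self]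
    exact zero_mem _

end Weights

section Model

-- A model of `B ⧸ I`: `(single k 1, 0)` stands for `zMonomial k * (a - 1)` and `(0, single n 1)`
-- for `b ^ n`.
variable (K) in
abbrev Model : Type := (ℤ →₀ K) × (ℕ →₀ K)

def modelA (q : K) : Model K →ₗ[K] Model K :=
  ((weightedMap (aWeight q) (· + 1)).coprod (weightedMap (q ^ ·) fun n : ℕ => -(n : ℤ))).prod
    (weightedMap (q ^ ·) id ∘ₗ LinearMap.snd K _ _)

def modelB (q : K) : Model K →ₗ[K] Model K :=
  (weightedMap (bWeight q) (· - 1)).prodMap (weightedMap 1 (· + 1))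

theorem modelA_apply (q : K) (v : ℤ →₀ K) (u : ℕ →₀ K) :
    modelA q (v, u) = (weightedMap (aWeight q) (· + 1) v +
      weightedMap (q ^ ·) (fun n : ℕ => -(n : ℤ)) u, weightedMap (q ^ ·) id u) := rfl

theorem modelB_apply (q : K) (v : ℤ →₀ K) (u : ℕ →₀ K) :
    modelB q (v, u) = (weightedMap (bWeight q) (· - 1) v, weightedMap 1 (· + 1) u) := rfl

theorem modelA_mul_modelB (hq0 : q ≠ 0) :
    modelA q * modelB q = q • (modelB q * modelA q) := by
  ext k : 4 <;>
    simp only [LinearMap.comp_apply, LinearMap.inl_apply, LinearMap.inr_apply, lsingle_apply,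
      Module.End.mul_apply, LinearMap.smul_apply, modelA_apply, modelB_apply, weightedMap_single,
      map_zero, add_zero, zero_add, Prod.smul_mk, smul_single, smul_zero, one_mul, Pi.one_apply]
  case hl.fst =>
    rw [sub_add_cancel, add_sub_cancel_right, bWeight_mul_aWeight_sub_one hq0, smul_eq_mul]
  case hr.fst =>
    rw [bWeight_neg_natCast, Nat.cast_succ, neg_add', smul_eq_mul, mul_one, pow_succ']
  case hr.snd => rw [id, id, smul_eq_mul, mul_one, pow_succ']

def rep (hq0 : q ≠ 0) : QuantumPlane K q →ₐ[K] Module.End K (Model K) :=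
  RingQuot.liftAlgHom K ⟨FreeAlgebra.lift K ![modelA q, modelB q], fun _ _ h => by
    cases h
    simpa only [map_mul, map_smul, FreeAlgebra.lift_ι_apply, Matrix.cons_val_zero,
      Matrix.cons_val_one, Matrix.head_cons] using modelA_mul_modelB hq0⟩

theorem rep_a (hq0 : q ≠ 0) : rep hq0 𝔞 = modelA q := by
  rw [a, rep, RingQuot.liftAlgHom_mkAlgHom_apply, FreeAlgebra.lift_ι_apply]
  rfl

theorem rep_b (hq0 : q ≠ 0) : rep hq0 𝔟 = modelB q := by
  rw [b, rep, RingQuot.liftAlgHom_mkAlgHom_apply, FreeAlgebra.lift_ι_apply]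
  rfl

theorem eq_zero_of_modelA_eq_pow_smul (hq0 : q ≠ 0) (hq : ∀ k : ℕ, 0 < k → q ^ k ≠ 1) {n : ℕ}
    {w : Model K} (h : modelA q w = q ^ n • w) : w = 0 := by
  obtain ⟨v, u⟩ := w
  rw [modelA_apply, Prod.smul_mk, Prod.mk.injEq] at h
  obtain ⟨hv, hu⟩ := h
  have hu_single : u = single n (u n) := by
    ext k
    have hk := weightedMap_apply (c := (q ^ ·)) Function.injective_id u k
    rw [hu, id, Finsupp.smul_apply, smul_eq_mul, ← sub_eq_zero, ← sub_mul] at hk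
    rcases eq_or_ne k n with rfl | hkn
    · rw [single_eq_same]
    · rw [single_eq_of_ne hkn]
      refine (mul_eq_zero.1 hk).resolve_left (sub_ne_zero.2 fun h => hkn ?_)
      exact (pow_injective_of_pow_ne_one hq0 hq h).symm
  rw [hu_single, weightedMap_single] at hv
  have hv0 := eq_zero_of_weightedMap_add_one_add_single_eq_smul (fun k => zpow_ne_zero _ hq0)
    (pow_ne_zero n hq0) hv
  rw [hv0, map_zero, zero_add, smul_zero, single_eq_zero] at hv
  rw [hv0, hu_single, (mul_eq_zero.1 hv).resolve_right (pow_ne_zero n hq0), single_zero,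
    Prod.mk_zero_zero]

end Model

section ModelToQuotient

variable (K q) in
def ofModel : Model K →ₗ[K] QuantumPlane K q :=
  (LinearMap.mulRight K (𝔞 - 1) ∘ₗ linearCombination K (zMonomial K q)).coprod
    (linearCombination K (𝔟 ^ ·))

theorem ofModel_apply (v : ℤ →₀ K) (u : ℕ →₀ K) :
    ofModel K q (v, u) =
      linearCombination K (zMonomial K q) v * (𝔞 - 1) + linearCombination K (𝔟 ^ ·) u := rfl

theorem a_mul_ofModel_sub_mem (w : Model K) :
    𝔞 * ofModel K q w - ofModel K q (modelA q w) ∈ 𝓘 := by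
  refine linearMap_prod_mem_of_single_mem (P := (𝓘).restrictScalars K)
    (LinearMap.mulLeft K 𝔞 ∘ₗ ofModel K q - ofModel K q ∘ₗ modelA q) (fun k => ?_) (fun n => ?_) w
  · simp only [LinearMap.sub_apply, LinearMap.coe_comp, Function.comp_apply, ofModel_apply,
      linearCombination_single, one_smul, map_zero, add_zero, LinearMap.mulLeft_apply,
      modelA_apply, weightedMap_single, one_mul, Algebra.smul_mul_assoc,
      Submodule.restrictScalars_mem]
    rw [← mul_assoc, ← smul_mul_assoc, ← sub_mul]
    exact Ideal.mul_mem_span_singleton_mul _ (a_mul_zMonomial_sub_mem K q k)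
  · simp only [LinearMap.sub_apply, LinearMap.coe_comp, Function.comp_apply, ofModel_apply,
      map_zero, zero_mul, linearCombination_single, one_smul, zero_add, LinearMap.mulLeft_apply,
      modelA_apply, weightedMap_single, one_mul, id_eq, Algebra.smul_mul_assoc,
      Submodule.restrictScalars_mem]
    rw [zMonomial_neg_natCast, ← smul_add, mul_sub_one (𝔟 ^ n), sub_add_cancel, a_mul_b_pow,
      sub_self]
    exact zero_mem _

theorem b_mul_ofModel_sub_mem (hq0 : q ≠ 0) (w : Model K) :
    𝔟 * ofModel K q w - ofModel K q (modelB q w) ∈ 𝓘 := by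
  refine linearMap_prod_mem_of_single_mem (P := (𝓘).restrictScalars K)
    (LinearMap.mulLeft K 𝔟 ∘ₗ ofModel K q - ofModel K q ∘ₗ modelB q) (fun k => ?_) (fun n => ?_) w
  · simp only [LinearMap.sub_apply, LinearMap.coe_comp, Function.comp_apply, ofModel_apply,
      linearCombination_single, one_smul, map_zero, add_zero, LinearMap.mulLeft_apply,
      modelB_apply, weightedMap_single, one_mul, Algebra.smul_mul_assoc,
      Submodule.restrictScalars_mem]
    rw [← mul_assoc, ← smul_mul_assoc, ← sub_mul]
    exact Ideal.mul_mem_span_singleton_mul _ (b_mul_zMonomial_sub_mem hq0 k)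
  · simp only [LinearMap.sub_apply, LinearMap.coe_comp, Function.comp_apply, ofModel_apply,
      map_zero, zero_mul, linearCombination_single, one_smul, zero_add, LinearMap.mulLeft_apply,
      modelB_apply, weightedMap_single, Pi.one_apply, mul_one, Submodule.restrictScalars_mem]
    rw [← pow_succ', sub_self]
    exact zero_mem _

theorem mul_ofModel_sub_mem (hq0 : q ≠ 0) (x : QuantumPlane K q) (w : Model K) :
    x * ofModel K q w - ofModel K q (rep hq0 x w) ∈ 𝓘 := by
  induction x using induction_on generalizing w with
  | algebraMap c =>
    rw [AlgHom.commutes, Module.algebraMap_end_apply, map_smul, ← Algebra.smul_def, sub_self]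
    exact zero_mem _
  | a => rw [rep_a]; exact a_mul_ofModel_sub_mem w
  | b => rw [rep_b]; exact b_mul_ofModel_sub_mem hq0 w
  | add x y hx hy =>
    rw [map_add, LinearMap.add_apply, map_add, add_mul, add_sub_add_comm]
    exact add_mem (hx w) (hy w)
  | mul x y hx hy =>
    have : x * y * ofModel K q w - ofModel K q (rep hq0 (x * y) w) =
        x * (y * ofModel K q w - ofModel K q (rep hq0 y w)) +
          (x * ofModel K q (rep hq0 y w) - ofModel K q (rep hq0 x (rep hq0 y w))) := by
      rw [map_mul, Module.End.mul_apply, mul_sub, mul_assoc, sub_add_sub_cancel]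
    rw [this]
    exact add_mem (Ideal.mul_mem_left _ x (hy w)) (hx _)

end ModelToQuotient

section QuotientToModel

def toModel (hq0 : q ≠ 0) : QuantumPlane K q →ₗ[K] Model K :=
  LinearMap.applyₗ ((0 : ℤ →₀ K), single 0 1) ∘ₗ (rep hq0).toLinearMap

theorem toModel_apply (hq0 : q ≠ 0) (x : QuantumPlane K q) :
    toModel hq0 x = rep hq0 x (0, single 0 1) := rfl

theorem sub_ofModel_toModel_mem (hq0 : q ≠ 0) (x : QuantumPlane K q) :
    x - ofModel K q (toModel hq0 x) ∈ 𝓘 := by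
  simpa [ofModel_apply, toModel_apply] using mul_ofModel_sub_mem hq0 x (0, single 0 1)

theorem toModel_eq_zero_of_mem (hq0 : q ≠ 0) {x : QuantumPlane K q} (hx : x ∈ 𝓘) :
    toModel hq0 x = 0 := by
  obtain ⟨y, rfl⟩ := Ideal.mem_span_singleton'.1 hx
  simp [toModel_apply, rep_a, rep_b, modelA_apply, modelB_apply, aWeight, bWeight]

theorem toModel_a_mul (hq0 : q ≠ 0) (x : QuantumPlane K q) :
    toModel hq0 (𝔞 * x) = modelA q (toModel hq0 x) := by
  rw [toModel_apply, map_mul, Module.End.mul_apply, rep_a, toModel_apply]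

theorem toModel_a_mul_snd_apply (hq0 : q ≠ 0) (x : QuantumPlane K q) (n : ℕ) :
    (toModel hq0 (𝔞 * x)).2 n = q ^ n * (toModel hq0 x).2 n := by
  rw [toModel_a_mul, ← Prod.mk.eta (p := toModel hq0 x), modelA_apply]
  exact weightedMap_apply Function.injective_id _ n

theorem mem_of_a_mul_sub_pow_smul_mem (hq0 : q ≠ 0) (hq : ∀ k : ℕ, 0 < k → q ^ k ≠ 1) (n : ℕ)
    {x : QuantumPlane K q} (h : 𝔞 * x - q ^ n • x ∈ 𝓘) : x ∈ 𝓘 := by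
  have hx : toModel hq0 x = 0 := by
    refine eq_zero_of_modelA_eq_pow_smul hq0 hq (n := n) ?_
    rw [← toModel_a_mul, ← map_smul, ← sub_eq_zero, ← map_sub, toModel_eq_zero_of_mem hq0 h]
  simpa [hx] using sub_ofModel_toModel_mem hq0 x

theorem mem_span_a_sub_one_of_toModel_snd_eq_zero (hq0 : q ≠ 0) {x : QuantumPlane K q}
    (h : (toModel hq0 x).2 = 0) : x ∈ Ideal.span {𝔞 - 1} := by
  have hI : 𝓘 ≤ Ideal.span {𝔞 - 1} := Ideal.span_le.2 <| Set.singleton_subset_iff.2 <|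
    Ideal.mul_mem_left _ _ (Submodule.mem_span_singleton_self _)
  rw [← sub_add_cancel x (ofModel K q (toModel hq0 x))]
  refine add_mem (hI (sub_ofModel_toModel_mem hq0 x)) ?_
  rw [← Prod.mk.eta (p := toModel hq0 x), h, ofModel_apply, map_zero, add_zero]
  exact Ideal.mul_mem_left _ _ (Submodule.mem_span_singleton_self _)

def quotientToModel (hq0 : q ≠ 0) : (QuantumPlane K q ⧸ 𝓘) →ₗ[K] Model K :=
  ((𝓘).restrictScalars K).liftQ (toModel hq0) (fun _ hx => toModel_eq_zero_of_mem hq0 hx) ∘ₗ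
    (Submodule.Quotient.restrictScalarsEquiv K 𝓘).symm.toLinearMap

theorem quotientToModel_mk (hq0 : q ≠ 0) (x : QuantumPlane K q) :
    quotientToModel hq0 (Submodule.Quotient.mk x) = toModel hq0 x := rfl

end QuotientToModel

end QuantumPlane

theorem quantumPlane_M_essential_extension (K : Type) [Field K] (q : K) (hq0 : q ≠ 0)
    (hq : ∀ k : ℕ, 0 < k → q ^ k ≠ 1) :
    ∀ N : Submodule (QuantumPlane K q)
      (QuantumPlane K q ⧸ (Ideal.span {(QuantumPlane.a K q * QuantumPlane.b K q - 1) *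
        (QuantumPlane.a K q - 1)} : Ideal (QuantumPlane K q))),
      N ≠ ⊥ →
      N ⊓ Submodule.map
        (Ideal.span {(QuantumPlane.a K q * QuantumPlane.b K q - 1) *
          (QuantumPlane.a K q - 1)} : Ideal (QuantumPlane K q)).mkQ
        (Ideal.span {QuantumPlane.a K q - 1} : Ideal (QuantumPlane K q)) ≠ ⊥ := by
  open QuantumPlane Submodule.Quotient in
  intro N hN
  refine Submodule.inf_ne_bot_of_diagonal_of_no_eigenvector
    (LinearMap.snd K _ _ ∘ₗ quotientToModel hq0) (fun m hm => ?_) (a K q) (q ^ ·)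
    (fun m n => ?_) (fun n m hm => ?_) hN <;>
    induction m using Submodule.Quotient.induction_on
  · exact Submodule.mem_map_of_mem (mem_span_a_sub_one_of_toModel_snd_eq_zero hq0 hm)
  · rw [← mk_smul, smul_eq_mul, LinearMap.comp_apply, LinearMap.comp_apply, quotientToModel_mk,
      quotientToModel_mk]
    exact toModel_a_mul_snd_apply hq0 _ n
  · rw [← mk_smul, ← mk_smul, smul_eq_mul, Submodule.Quotient.eq] at hm
    exact (mk_eq_zero _).2 (mem_of_a_mul_sub_pow_smul_mem hq0 hq n hm)

end
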